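/- arXiv:0804.3549 — 6 statements merged into one kernel-verified Lean document; each statement's English description precedes it below -/
import Mathlib

section
/- Let s ≥ 0 and β ≥ 0. There is a constant C(s) such that for all integers a, b, k with a + b + k = 0 and |a| ≤ |b| ≤ |k|, one has |k·|k|^{2s} + a·|a|^{2s} + b·|b|^{2s}| ≤ C(s)·|a|·|k|^{2s}, and consequently this is bounded by C(s)·|a|^{1-2β}·|b|^{s+β}·|k|^{s+β}. -/
/-!
Write `φ(x) = x·|x|^p` with `p = 2s`. Since `b = -(a + k)` and `φ` is odd, the sum equals
`(φ k - φ (k + a)) + φ a`. By the mean value inequality the bracket is at most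
`(p + 1)·|a|·|k|^p`, and `|φ a| ≤ |a|·|k|^p`. For the second bound split
`|a| = |a|^{1-2β}·|a|^{2β} ≤ |a|^{1-2β}·|b|^β·|k|^β` and `|k|^{2s} ≤ 2^s·|b|^s·|k|^s`,
the latter because `|k| = |a + b| ≤ 2|b|`.
-/

open Real

noncomputable def signedPow (p x : ℝ) : ℝ := x * |x| ^ p

section signedPow

variable {p x : ℝ}

theorem signedPow_neg (p x : ℝ) : signedPow p (-x) = -signedPow p x := by
  simp only [signedPow, abs_neg, neg_mul]

theorem abs_signedPow (p x : ℝ) : |signedPow p x| = |x| * |x| ^ p := by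
  rw [signedPow, abs_mul, abs_of_nonneg (rpow_nonneg (abs_nonneg x) p)]

theorem signedPow_of_nonneg (hx : 0 ≤ x) : signedPow p x = x * x ^ p := by
  rw [signedPow, abs_of_nonneg hx]

theorem signedPow_of_neg (hx : x < 0) : signedPow p x = -(|x| * |x| ^ p) := by
  rw [signedPow, abs_of_neg hx, neg_mul, neg_neg]

end signedPow

theorem mul_rpow_sub_mul_rpow_le {p x y : ℝ} (hp : 0 ≤ p) (hy : 0 ≤ y) (hyx : y ≤ x) :
    x * x ^ p - y * y ^ p ≤ (p + 1) * (x - y) * x ^ p := by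
  obtain rfl | hx := (hy.trans hyx).eq_or_lt
  · simp [le_antisymm hyx hy]
  have hbernoulli : 1 + (p + 1) * (y / x - 1) ≤ (y / x) ^ (p + 1) := by
    simpa using one_add_mul_self_le_rpow_one_add (s := y / x - 1)
      (by linarith [div_nonneg hy hx.le]) (by linarith : 1 ≤ p + 1)
  have hscaled := mul_le_mul_of_nonneg_right hbernoulli (rpow_nonneg hx.le (p + 1))
  rw [div_rpow hy hx.le, div_mul_cancel₀ _ (rpow_pos_of_pos hx _).ne',
    rpow_add_one' hy (by linarith), rpow_add_one hx.ne'] at hscaled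
  have hexpand : (1 + (p + 1) * (y / x - 1)) * (x ^ p * x)
      = x * x ^ p + (p + 1) * (y - x) * x ^ p := by
    field_simp
  linarith

theorem abs_signedPow_sub_signedPow_le_of_nonneg {p x y : ℝ} (hp : 0 ≤ p) (hx : 0 ≤ x)
    (hyx : |y| ≤ x) : |signedPow p x - signedPow p y| ≤ (p + 1) * |x - y| * x ^ p := by
  rw [signedPow_of_nonneg hx, abs_of_nonneg (by linarith [le_abs_self y] : 0 ≤ x - y)]
  rcases le_or_gt 0 y with hy | hy
  · rw [abs_of_nonneg hy] at hyx
    have hmono : y * y ^ p ≤ x * x ^ p :=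
      mul_le_mul hyx (rpow_le_rpow hy hyx hp) (rpow_nonneg hy p) hx
    rw [signedPow_of_nonneg hy, abs_of_nonneg (sub_nonneg.mpr hmono)]
    exact mul_rpow_sub_mul_rpow_le hp hy hyx
  · have hyp : |y| ^ p ≤ x ^ p := rpow_le_rpow (abs_nonneg y) hyx hp
    rw [signedPow_of_neg hy, sub_neg_eq_add,
      abs_of_nonneg (by positivity : 0 ≤ x * x ^ p + |y| * |y| ^ p)]
    calc x * x ^ p + |y| * |y| ^ p ≤ x * x ^ p + |y| * x ^ p := by gcongr
      _ = 1 * (x - y) * x ^ p := by rw [abs_of_neg hy]; ring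
      _ ≤ (p + 1) * (x - y) * x ^ p := by gcongr <;> linarith

/-- Mean value inequality for `signedPow p`, whose derivative is `(p + 1)·|x|^p`. -/
theorem abs_signedPow_sub_signedPow_le {p x y : ℝ} (hp : 0 ≤ p) (hyx : |y| ≤ |x|) :
    |signedPow p x - signedPow p y| ≤ (p + 1) * |x - y| * |x| ^ p := by
  rcases le_or_gt 0 x with hx | hx
  · simpa [abs_of_nonneg hx] using
      abs_signedPow_sub_signedPow_le_of_nonneg hp hx (hyx.trans_eq (abs_of_nonneg hx))
  · have h := abs_signedPow_sub_signedPow_le_of_nonneg (y := -y) hp (neg_nonneg.mpr hx.le)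
      (by rwa [abs_neg, ← abs_of_neg hx])
    rwa [signedPow_neg, signedPow_neg, neg_sub_neg, abs_sub_comm, sub_neg_eq_add,
      neg_add_eq_sub, abs_sub_comm y x, ← abs_of_neg hx] at h

theorem abs_signedPow_add_signedPow_add_signedPow_le {p a b k : ℝ} (hp : 0 ≤ p)
    (habk : a + b + k = 0) (hak : |a| ≤ |k|) (hbk : |b| ≤ |k|) :
    |signedPow p k + signedPow p a + signedPow p b| ≤ (p + 2) * |a| * |k| ^ p := by
  have hb : b = -(k + a) := by linarith
  have hmvt : |signedPow p k - signedPow p (k + a)| ≤ (p + 1) * |a| * |k| ^ p := by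
    have hka : |k + a| ≤ |k| := by rwa [hb, abs_neg] at hbk
    have h := abs_signedPow_sub_signedPow_le hp hka
    rwa [sub_add_cancel_left, abs_neg] at h
  have hsmall : |signedPow p a| ≤ |a| * |k| ^ p := by
    rw [abs_signedPow]
    exact mul_le_mul_of_nonneg_left (rpow_le_rpow (abs_nonneg a) hak hp) (abs_nonneg a)
  calc |signedPow p k + signedPow p a + signedPow p b|
      = |(signedPow p k - signedPow p (k + a)) + signedPow p a| := by
        rw [hb, signedPow_neg]; ring_nf
    _ ≤ (p + 1) * |a| * |k| ^ p + |a| * |k| ^ p :=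
        (abs_add_le _ _).trans (add_le_add hmvt hsmall)
    _ = (p + 2) * |a| * |k| ^ p := by ring

theorem mul_rpow_two_mul_le_of_le_of_le_two_mul {s β x y z : ℝ} (hs : 0 ≤ s) (hβ : 0 ≤ β)
    (hx : 0 ≤ x) (hxy : x ≤ y) (hyz : y ≤ z) (hzy : z ≤ 2 * y) :
    x * z ^ (2 * s) ≤ 2 ^ s * (x ^ (1 - 2 * β) * y ^ (s + β) * z ^ (s + β)) := by
  obtain rfl | hx := hx.eq_or_lt
  · rw [zero_mul]
    exact mul_nonneg (by positivity) (mul_nonneg (mul_nonneg (rpow_nonneg le_rfl _)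
      (rpow_nonneg hxy _)) (rpow_nonneg (hxy.trans hyz) _))
  have hy := hx.trans_le hxy
  have hz := hy.trans_le hyz
  have hxsplit : x ≤ x ^ (1 - 2 * β) * (y ^ β * z ^ β) := by
    calc x = x ^ (1 - 2 * β) * (x ^ β * x ^ β) := by
          rw [← rpow_add hx, ← rpow_add hx, show 1 - 2 * β + (β + β) = 1 by ring, rpow_one]
      _ ≤ x ^ (1 - 2 * β) * (y ^ β * z ^ β) := by
          gcongr
          exact hxy.trans hyz
  have hzsplit : z ^ (2 * s) ≤ 2 ^ s * y ^ s * z ^ s := by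
    calc z ^ (2 * s) = z ^ s * z ^ s := by rw [← rpow_add hz, two_mul]
      _ ≤ (2 * y) ^ s * z ^ s := by gcongr
      _ = 2 ^ s * y ^ s * z ^ s := by rw [mul_rpow zero_le_two hy.le]
  calc x * z ^ (2 * s) ≤ x ^ (1 - 2 * β) * (y ^ β * z ^ β) * (2 ^ s * y ^ s * z ^ s) := by
        gcongr
    _ = 2 ^ s * (x ^ (1 - 2 * β) * y ^ (s + β) * z ^ (s + β)) := by
        rw [rpow_add hy, rpow_add hz]
        ring

/-- For `s ≥ 0`, `β ≥ 0` there is a constant `C` such that for all integers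
`a, b, k` with `a + b + k = 0` and `|a| ≤ |b| ≤ |k|`,
`|k·|k|^{2s} + a·|a|^{2s} + b·|b|^{2s}| ≤ C·|a|·|k|^{2s}`, and consequently it is
also bounded by `C·|a|^{1-2β}·|b|^{s+β}·|k|^{s+β}`. -/
theorem stmt_1 (s β : ℝ) (hs : 0 ≤ s) (hβ : 0 ≤ β) :
    ∃ C > 0, ∀ a b k : ℤ, a + b + k = 0 → |a| ≤ |b| → |b| ≤ |k| →
      |(k : ℝ) * |(k : ℝ)| ^ (2 * s) + (a : ℝ) * |(a : ℝ)| ^ (2 * s)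
          + (b : ℝ) * |(b : ℝ)| ^ (2 * s)| ≤ C * |(a : ℝ)| * |(k : ℝ)| ^ (2 * s) ∧
      |(k : ℝ) * |(k : ℝ)| ^ (2 * s) + (a : ℝ) * |(a : ℝ)| ^ (2 * s)
          + (b : ℝ) * |(b : ℝ)| ^ (2 * s)| ≤
        C * |(a : ℝ)| ^ (1 - 2 * β) * |(b : ℝ)| ^ (s + β) * |(k : ℝ)| ^ (s + β) := by
  refine ⟨2 ^ s * (2 * s + 2), by positivity, fun a b k habk hab hbk => ?_⟩
  have habk' : (a : ℝ) + b + k = 0 := by exact_mod_cast habk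
  have hab' : |(a : ℝ)| ≤ |(b : ℝ)| := by exact_mod_cast hab
  have hbk' : |(b : ℝ)| ≤ |(k : ℝ)| := by exact_mod_cast hbk
  have hkb : |(k : ℝ)| ≤ 2 * |(b : ℝ)| := by
    rw [show (k : ℝ) = -(a + b) by linarith, abs_neg, two_mul]
    exact (abs_add_le _ _).trans (by linarith)
  have hmain : |signedPow (2 * s) k + signedPow (2 * s) a + signedPow (2 * s) b|
      ≤ (2 * s + 2) * |(a : ℝ)| * |(k : ℝ)| ^ (2 * s) :=
    abs_signedPow_add_signedPow_add_signedPow_le (by positivity) habk' (hab'.trans hbk') hbk'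
  have hconst : 2 * s + 2 ≤ 2 ^ s * (2 * s + 2) :=
    le_mul_of_one_le_left (by positivity) (one_le_rpow one_le_two hs)
  refine ⟨hmain.trans ?_, hmain.trans ?_⟩
  · gcongr
  · have := mul_rpow_two_mul_le_of_le_of_le_two_mul hs hβ (abs_nonneg _) hab' hbk' hkb
    calc (2 * s + 2) * |(a : ℝ)| * |(k : ℝ)| ^ (2 * s)
        = (2 * s + 2) * (|(a : ℝ)| * |(k : ℝ)| ^ (2 * s)) := mul_assoc _ _ _
      _ ≤ _ := mul_le_mul_of_nonneg_left this (by positivity)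
      _ = _ := by ring
end

section
/- Let ω : [0,∞) → [0,∞) be a modulus of continuity (increasing, continuous, concave, ω(0)=0) that is differentiable at 0 with ω'(0) < ∞ and satisfies ω''(0) = -∞ in the sense that ω(ξ) = ω'(0)ξ - ρ(ξ)ξ² with ρ(ξ) → +∞ as ξ → 0+. If f : ℝ → ℝ is a C² periodic function having modulus of continuity ω (i.e., |f(x)-f(y)| ≤ ω(|x-y|) for all x, y), then sup |f'| < ω'(0). -/
/-!
Since `f` is `C²` and periodic, `f''` is bounded, so `f'` is `K`-Lipschitz for some `K`. By the
mean value theorem, `|f'(x)| ξ ≤ |f(x + ξ) - f(x)| + K ξ² ≤ ω(ξ) + K ξ² = D ξ - (ρ(ξ) - K) ξ²`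
for every `ξ > 0`. Choosing `ξ₀` small enough that `ρ(ξ₀) ≥ K + 1` gives `|f'| ≤ D - ξ₀`.
-/

open Function NNReal

theorem Function.Periodic.deriv {F : Type*} [NormedAddCommGroup F] [NormedSpace ℝ F]
    {g : ℝ → F} {c : ℝ} (hg : Periodic g c) :
    Periodic (deriv g) c := fun x => by
  rw [← deriv_comp_add_const, show (fun y => g (y + c)) = g from funext hg]

theorem Function.Periodic.exists_lipschitzWith_deriv {f : ℝ → ℝ} {L : ℝ} (hper : Periodic f L)
    (hL : L ≠ 0) (hf : ContDiff ℝ 2 f) : ∃ K : ℝ≥0, LipschitzWith K (_root_.deriv f) := by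
  have hf' : ContDiff ℝ 1 (_root_.deriv f) := (contDiff_succ_iff_deriv.mp hf).2.2
  obtain ⟨C, hC⟩ := isBounded_iff_forall_norm_le.mp
    (hper.deriv.deriv.isBounded_of_continuous hL (hf'.continuous_deriv le_rfl))
  refine ⟨C.toNNReal, lipschitzWith_of_nnnorm_deriv_le (hf'.differentiable one_ne_zero) fun x => ?_⟩
  rw [← NNReal.coe_le_coe, coe_nnnorm]
  exact (hC _ ⟨x, rfl⟩).trans (Real.le_coe_toNNReal C)

theorem abs_deriv_mul_le_of_lipschitzWith_deriv {f : ℝ → ℝ} {K : ℝ≥0} (hf : Differentiable ℝ f)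
    (hK : LipschitzWith K (deriv f)) (x : ℝ) {ξ : ℝ} (hξ : 0 < ξ) :
    |deriv f x| * ξ ≤ |f (x + ξ) - f x| + K * ξ ^ 2 := by
  obtain ⟨c, ⟨hxc, hcx⟩, hslope⟩ := exists_deriv_eq_slope f (lt_add_of_pos_right x hξ)
    hf.continuous.continuousOn hf.differentiableOn
  have hcξ : deriv f c * ξ = f (x + ξ) - f x := by
    rw [hslope, add_sub_cancel_left, div_mul_cancel₀ _ hξ.ne']
  have hdist : |deriv f x - deriv f c| ≤ K * ξ := by
    calc |deriv f x - deriv f c| ≤ K * |x - c| := by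
          simpa only [Real.dist_eq] using hK.dist_le_mul x c
      _ ≤ K * ξ := by
          gcongr
          rw [abs_sub_comm, abs_of_pos (sub_pos.mpr hxc)]
          linarith
  calc |deriv f x| * ξ = |(deriv f x - deriv f c) * ξ + (f (x + ξ) - f x)| := by
        rw [← hcξ, ← abs_of_pos hξ, ← abs_mul, abs_of_pos hξ]; ring_nf
    _ ≤ |(deriv f x - deriv f c) * ξ| + |f (x + ξ) - f x| := abs_add_le _ _
    _ = |deriv f x - deriv f c| * ξ + |f (x + ξ) - f x| := by rw [abs_mul, abs_of_pos hξ]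
    _ ≤ K * ξ * ξ + |f (x + ξ) - f x| := by gcongr
    _ = |f (x + ξ) - f x| + K * ξ ^ 2 := by ring

theorem stmt_2_general (ω ρ : ℝ → ℝ) (D : ℝ)
    (hrep : ∀ ξ : ℝ, 0 < ξ → ω ξ = D * ξ - ρ ξ * ξ ^ 2)
    (hρ : Filter.Tendsto ρ (nhdsWithin 0 (Set.Ioi 0)) Filter.atTop)
    (f : ℝ → ℝ) (L : ℝ) (hL : 0 < L)
    (hper : Function.Periodic f L)
    (hf : ContDiff ℝ 2 f)
    (hmod : ∀ x y : ℝ, |f x - f y| ≤ ω |x - y|) :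
    ∃ M < D, ∀ x : ℝ, |deriv f x| ≤ M := by
  obtain ⟨K, hK⟩ := hper.exists_lipschitzWith_deriv hL.ne' hf
  obtain ⟨ξ, hρξ, hξ⟩ :=
    ((hρ.eventually_ge_atTop (K + 1)).and self_mem_nhdsWithin).exists
  have hξ : (0 : ℝ) < ξ := hξ
  refine ⟨D - ξ, by linarith, fun x => le_of_mul_le_mul_right ?_ hξ⟩
  have hω : |f (x + ξ) - f x| ≤ D * ξ - ρ ξ * ξ ^ 2 := by
    simpa [abs_of_pos hξ, hrep ξ hξ] using hmod (x + ξ) x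
  have hρK : (K + 1) * ξ ^ 2 ≤ ρ ξ * ξ ^ 2 := by gcongr
  have hslope := abs_deriv_mul_le_of_lipschitzWith_deriv (hf.differentiable two_ne_zero) hK x hξ
  linarith

/-- If a modulus of continuity `ω` (increasing, continuous, concave, `ω 0 = 0`) has
finite derivative `D` at `0` and `ω''(0) = -∞` in the sense `ω ξ = D ξ - ρ(ξ) ξ²` with
`ρ(ξ) → +∞` as `ξ → 0⁺`, then any `C²` periodic function `f` with modulus of continuity
`ω` satisfies `sup |f'| < D`. -/
theorem stmt_2 (ω ρ : ℝ → ℝ) (D : ℝ)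
    (hω0 : ω 0 = 0)
    (hmono : MonotoneOn ω (Set.Ici 0))
    (hcont : ContinuousOn ω (Set.Ici 0))
    (hconc : ConcaveOn ℝ (Set.Ici 0) ω)
    (hderiv : HasDerivWithinAt ω D (Set.Ici 0) 0)
    (hrep : ∀ ξ : ℝ, 0 < ξ → ω ξ = D * ξ - ρ ξ * ξ ^ 2)
    (hρ : Filter.Tendsto ρ (nhdsWithin 0 (Set.Ioi 0)) Filter.atTop)
    (f : ℝ → ℝ) (L : ℝ) (hL : 0 < L)
    (hper : Function.Periodic f L)
    (hf : ContDiff ℝ 2 f)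
    (hmod : ∀ x y : ℝ, |f x - f y| ≤ ω |x - y|) :
    ∃ M < D, ∀ x : ℝ, |deriv f x| ≤ M :=
  stmt_2_general ω ρ D hrep hρ f L hL hper hf hmod
end

section
/- Define for K > 0 and 0 ≤ ξ ≤ ξ₀ := (K/(4π))² the function ω(ξ) = ξ/(1 + K√ξ). Then on (0, ξ₀], ω is concave, its second derivative ω''(ξ) = -K(3ξ^{-1/2} + K)/(4(1+K√ξ)³) is negative and increasing, and for all 0 < ξ ≤ ξ₀ one has 2ω(ξ)ω'(ξ) + (1/π)ξω''(ξ) ≤ 0, i.e., ξ^{1/2}(2ξ^{1/2} + Kξ)/(1+Kξ^{1/2})³ ≤ K(3ξ^{1/2} + Kξ)/(4π(1+Kξ^{1/2})³). -/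
/-!
With `s = √ξ`, one has `ω' = (2 + K s) / (2 (1 + K s)²)` and
`ω'' = -K (3/s + K) / (4 (1 + K s)³)`, which is negative and increasing because the
numerator of `-ω''` decreases and its denominator increases with `s`. After clearing the
common factor `(1 + K s)³`, the inequality `2 ω ω' + ξ ω'' / π ≤ 0` reads
`4π s (2s + K s²) ≤ K (3s + K s²)`, which follows from `4π s ≤ K`, i.e. from `ξ ≤ ξ₀`.
-/

open Real Set

noncomputable def innerModulus (K ξ : ℝ) : ℝ := ξ / (1 + K * √ξ)

variable {K ξ : ℝ}

lemma one_add_mul_sqrt_pos (hK : 0 ≤ K) (ξ : ℝ) : 0 < 1 + K * √ξ := by positivity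

lemma hasDerivAt_innerModulus (hK : 0 ≤ K) (hξ : 0 < ξ) :
    HasDerivAt (innerModulus K) ((2 + K * √ξ) / (2 * (1 + K * √ξ) ^ 2)) ξ := by
  have hs : 0 < √ξ := sqrt_pos.mpr hξ
  have hden : HasDerivAt (fun y => 1 + K * √y) (K * (1 / (2 * √ξ))) ξ :=
    ((hasDerivAt_sqrt hξ.ne').const_mul K).const_add 1
  refine ((hasDerivAt_id ξ).div hden (one_add_mul_sqrt_pos hK ξ).ne').congr_deriv ?_
  have hsq : √ξ ^ 2 = ξ := sq_sqrt hξ.le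
  set s := √ξ
  rw [id, ← hsq]
  field_simp
  ring

lemma eqOn_deriv_innerModulus (hK : 0 ≤ K) :
    EqOn (deriv (innerModulus K)) (fun y => (2 + K * √y) / (2 * (1 + K * √y) ^ 2)) (Ioi 0) :=
  fun _ hy => (hasDerivAt_innerModulus hK hy).deriv

lemma hasDerivAt_deriv_innerModulus (hK : 0 ≤ K) (hξ : 0 < ξ) :
    HasDerivAt (deriv (innerModulus K)) (-(K * (3 / √ξ + K)) / (4 * (1 + K * √ξ) ^ 3)) ξ := by
  have hs : 0 < √ξ := sqrt_pos.mpr hξ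
  have hsqrt : HasDerivAt (fun y => K * √y) (K * (1 / (2 * √ξ))) ξ :=
    (hasDerivAt_sqrt hξ.ne').const_mul K
  have hformula := (hsqrt.const_add 2).div (((hsqrt.const_add 1).pow 2).const_mul 2)
    (by positivity : (2 : ℝ) * (1 + K * √ξ) ^ 2 ≠ 0)
  refine (hformula.congr_of_eventuallyEq ?_).congr_deriv ?_
  · filter_upwards [Ioi_mem_nhds hξ] with y hy using eqOn_deriv_innerModulus hK hy
  · simp only [Pi.pow_apply]
    field_simp
    ring

lemma deriv_deriv_innerModulus (hK : 0 ≤ K) (hξ : 0 < ξ) :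
    deriv (deriv (innerModulus K)) ξ = -(K * (3 / √ξ + K)) / (4 * (1 + K * √ξ) ^ 3) :=
  (hasDerivAt_deriv_innerModulus hK hξ).deriv

lemma deriv_deriv_innerModulus_neg (hK : 0 < K) (hξ : 0 < ξ) :
    deriv (deriv (innerModulus K)) ξ < 0 := by
  have hs : 0 < √ξ := sqrt_pos.mpr hξ
  rw [deriv_deriv_innerModulus hK.le hξ, neg_div, neg_lt_zero]
  positivity

lemma monotoneOn_deriv_deriv_innerModulus (hK : 0 ≤ K) :
    MonotoneOn (deriv (deriv (innerModulus K))) (Ioi 0) := by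
  intro x hx y hy hxy
  have hsx : 0 < √x := sqrt_pos.mpr hx
  have hsxy : √x ≤ √y := sqrt_le_sqrt hxy
  rw [deriv_deriv_innerModulus hK hx, deriv_deriv_innerModulus hK hy, neg_div, neg_div,
    neg_le_neg_iff]
  apply div_le_div₀ (by positivity) (by gcongr) (by positivity) (by gcongr)

lemma concaveOn_innerModulus (hK : 0 ≤ K) : ConcaveOn ℝ (Ici 0) (innerModulus K) := by
  refine concaveOn_of_deriv2_nonpos (convex_Ici 0) ?_ ?_ ?_ ?_
  · exact continuousOn_id.div (by fun_prop) fun x _ => (one_add_mul_sqrt_pos hK x).ne'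
  all_goals rw [interior_Ici]
  · exact fun x hx => (hasDerivAt_innerModulus hK hx).differentiableAt.differentiableWithinAt
  · exact fun x hx =>
      (hasDerivAt_deriv_innerModulus hK hx).differentiableAt.differentiableWithinAt
  · intro x hx
    rw [Function.iterate_succ_apply, Function.iterate_one, deriv_deriv_innerModulus hK hx,
      neg_div, neg_nonpos]
    have hs : 0 < √x := sqrt_pos.mpr hx
    positivity

lemma two_mul_innerModulus_mul_deriv_add_eq (hK : 0 ≤ K) (hξ : 0 < ξ) {c : ℝ} (hc : 0 < c) :
    2 * innerModulus K ξ * deriv (innerModulus K) ξ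
        + 1 / c * ξ * deriv (deriv (innerModulus K)) ξ
      = √ξ * (2 * √ξ + K * ξ) / (1 + K * √ξ) ^ 3
        - K * (3 * √ξ + K * ξ) / (4 * c * (1 + K * √ξ) ^ 3) := by
  have hs : 0 < √ξ := sqrt_pos.mpr hξ
  have hden := one_add_mul_sqrt_pos hK ξ
  have hsq : √ξ ^ 2 = ξ := sq_sqrt hξ.le
  rw [(hasDerivAt_innerModulus hK hξ).deriv, deriv_deriv_innerModulus hK hξ, innerModulus]
  set s := √ξ
  rw [← hsq]
  field_simp
  ring

lemma sqrt_mul_div_le_of_four_mul_mul_sqrt_le (hK : 0 ≤ K) (hξ : 0 ≤ ξ) {c : ℝ} (hc : 0 < c)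
    (hcK : 4 * c * √ξ ≤ K) :
    √ξ * (2 * √ξ + K * ξ) / (1 + K * √ξ) ^ 3
      ≤ K * (3 * √ξ + K * ξ) / (4 * c * (1 + K * √ξ) ^ 3) := by
  have hden := one_add_mul_sqrt_pos hK ξ
  rw [mul_comm (4 * c), ← div_div, div_right_comm]
  refine div_le_div_of_nonneg_right ?_ (by positivity)
  rw [le_div_iff₀ (by positivity)]
  calc √ξ * (2 * √ξ + K * ξ) * (4 * c) = 4 * c * √ξ * (2 * √ξ + K * ξ) := by ring
    _ ≤ K * (2 * √ξ + K * ξ) := by gcongr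
    _ ≤ K * (3 * √ξ + K * ξ) := by gcongr; linarith [sqrt_nonneg ξ]

/-- Properties of the inner piece `ω(ξ) = ξ/(1+K√ξ)` of the modulus of continuity on
`(0, ξ₀]`, `ξ₀ = (K/(4π))²`: concavity, the formula for `ω''`, its negativity and
monotonicity, and the key inequality `2ω(ξ)ω'(ξ) + (1/π)ξω''(ξ) ≤ 0`. -/
theorem stmt_5 (K : ℝ) (hK : 0 < K) :
    ConcaveOn ℝ (Set.Ioc 0 ((K / (4 * Real.pi)) ^ 2))
      (fun ξ => ξ / (1 + K * Real.sqrt ξ)) ∧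
    (∀ ξ ∈ Set.Ioc (0 : ℝ) ((K / (4 * Real.pi)) ^ 2),
      deriv (deriv (fun ξ => ξ / (1 + K * Real.sqrt ξ))) ξ
          = -(K * (3 / Real.sqrt ξ + K)) / (4 * (1 + K * Real.sqrt ξ) ^ 3) ∧
      deriv (deriv (fun ξ => ξ / (1 + K * Real.sqrt ξ))) ξ < 0) ∧
    MonotoneOn (deriv (deriv (fun ξ => ξ / (1 + K * Real.sqrt ξ))))
      (Set.Ioc 0 ((K / (4 * Real.pi)) ^ 2)) ∧
    ∀ ξ ∈ Set.Ioc (0 : ℝ) ((K / (4 * Real.pi)) ^ 2),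
      2 * (ξ / (1 + K * Real.sqrt ξ)) * deriv (fun ξ => ξ / (1 + K * Real.sqrt ξ)) ξ
          + (1 / Real.pi) * ξ * deriv (deriv (fun ξ => ξ / (1 + K * Real.sqrt ξ))) ξ ≤ 0 ∧
      Real.sqrt ξ * (2 * Real.sqrt ξ + K * ξ) / (1 + K * Real.sqrt ξ) ^ 3
          ≤ K * (3 * Real.sqrt ξ + K * ξ) / (4 * Real.pi * (1 + K * Real.sqrt ξ) ^ 3) := by
  have hIoc : Ioc 0 ((K / (4 * π)) ^ 2) ⊆ Ici 0 := Ioc_subset_Icc_self.trans Icc_subset_Ici_self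
  refine ⟨(concaveOn_innerModulus hK.le).subset hIoc (convex_Ioc _ _),
    fun ξ hξ => ⟨deriv_deriv_innerModulus hK.le hξ.1, deriv_deriv_innerModulus_neg hK hξ.1⟩,
    (monotoneOn_deriv_deriv_innerModulus hK.le).mono Ioc_subset_Ioi_self, fun ξ hξ => ?_⟩
  have hsqrt : 4 * π * √ξ ≤ K := by
    rw [← le_div_iff₀' (by positivity), sqrt_le_left (by positivity)]
    exact hξ.2
  have hkey := sqrt_mul_div_le_of_four_mul_mul_sqrt_le hK.le hξ.1.le pi_pos hsqrt
  refine ⟨?_, hkey⟩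
  change 2 * innerModulus K ξ * deriv (innerModulus K) ξ
    + 1 / π * ξ * deriv (deriv (innerModulus K)) ξ ≤ 0
  rw [two_mul_innerModulus_mul_deriv_add_eq hK.le hξ.1 pi_pos]
  exact sub_nonpos.mpr hkey
end

section
/- Let ω be a C² concave function on an interval containing [ξ - 2η, ξ + 2η] with ω'' negative and nondecreasing there. Then ω(ξ+2η) + ω(ξ-2η) - 2ω(ξ) ≤ 2ω''(ξ)η² for all 0 < 2η ≤ ξ, and consequently ∫₀^{ξ/2} [ω(ξ+2η) + ω(ξ-2η) - 2ω(ξ)]/η² dη ≤ ξ ω''(ξ). -/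
/-!
Write `φ(h) = ω(ξ + h) + ω(ξ - h) - 2ω(ξ)`, so that `φ(0) = φ'(0) = 0` and
`φ''(h) = ω''(ξ + h) + ω''(ξ - h)`. As `ω''` is negative and nondecreasing,
`φ'' ≤ ω''(ξ)`, and integrating twice gives `φ(h) ≤ ω''(ξ) h² / 2`; with `h = 2η` this is the pointwise
bound, and integrating it over `(0, ξ/2)` gives the integral bound. Monotonicity also bounds
`φ(2η) / η²` below by `4ω''(0)`, which makes the integrand integrable, so the integral is not
the junk value `0`.
-/

open MeasureTheory Set

section SecondOrderComparison

variable {F G H : ℝ → ℝ} {a b k : ℝ}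

theorem nonpos_of_hasDerivAt_nonpos (hF : ∀ x ∈ Icc a b, HasDerivAt F (G x) x) (hFa : F a = 0)
    (hG : ∀ x ∈ Ioo a b, G x ≤ 0) : ∀ x ∈ Icc a b, F x ≤ 0 := by
  have hanti : AntitoneOn F (Icc a b) :=
    antitoneOn_of_hasDerivWithinAt_nonpos (convex_Icc a b)
      (fun x hx => (hF x hx).continuousAt.continuousWithinAt)
      (fun x hx => (hF x (interior_subset hx)).hasDerivWithinAt)
      (fun x hx => hG x (by rwa [interior_Icc] at hx))
  intro x hx
  simpa [hFa] using hanti (left_mem_Icc.2 (hx.1.trans hx.2)) hx hx.1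

theorem le_mul_sq_of_second_deriv_le (hF : ∀ x ∈ Icc a b, HasDerivAt F (G x) x)
    (hG : ∀ x ∈ Icc a b, HasDerivAt G (H x) x) (hFa : F a = 0) (hGa : G a = 0)
    (hH : ∀ x ∈ Ioo a b, H x ≤ k) : ∀ x ∈ Icc a b, F x ≤ k / 2 * (x - a) ^ 2 := by
  have hG_le : ∀ x ∈ Icc a b, G x - k * (x - a) ≤ 0 :=
    nonpos_of_hasDerivAt_nonpos
      (fun x hx => by
        simpa using (hG x hx).fun_sub (((hasDerivAt_id x).sub_const a).const_mul k))
      (by simp [hGa]) (fun x hx => by linarith [hH x hx])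
  have hF_le : ∀ x ∈ Icc a b, F x - k / 2 * (x - a) ^ 2 ≤ 0 :=
    nonpos_of_hasDerivAt_nonpos
      (fun x hx => ((hF x hx).fun_sub
        ((((hasDerivAt_id x).sub_const a).fun_pow 2).const_mul (k / 2))).congr_deriv
          (by simp only [id_eq, Nat.cast_ofNat]; ring))
      (by simp [hFa]) (fun x hx => hG_le x (Ioo_subset_Icc_self hx))
  exact fun x hx => by linarith [hF_le x hx]

theorem mul_sq_le_of_le_second_deriv (hF : ∀ x ∈ Icc a b, HasDerivAt F (G x) x)
    (hG : ∀ x ∈ Icc a b, HasDerivAt G (H x) x) (hFa : F a = 0) (hGa : G a = 0)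
    (hH : ∀ x ∈ Ioo a b, k ≤ H x) : ∀ x ∈ Icc a b, k / 2 * (x - a) ^ 2 ≤ F x := by
  have := le_mul_sq_of_second_deriv_le (F := fun x => -F x) (G := fun x => -G x)
    (H := fun x => -H x) (k := -k) (fun x hx => (hF x hx).fun_neg)
    (fun x hx => (hG x hx).fun_neg) (by simp [hFa]) (by simp [hGa])
    (fun x hx => neg_le_neg (hH x hx))
  intro x hx
  linarith [this x hx]

end SecondOrderComparison

section CentralDifference

variable {f : ℝ → ℝ} {x h r k : ℝ}

theorem hasDerivAt_centralDiff (hp : DifferentiableAt ℝ f (x + h))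
    (hm : DifferentiableAt ℝ f (x - h)) :
    HasDerivAt (fun h => f (x + h) - f (x - h)) (deriv f (x + h) + deriv f (x - h)) h := by
  simpa using (hp.hasDerivAt.comp_const_add x h).fun_sub (hm.hasDerivAt.comp_const_sub x h)

theorem hasDerivAt_centralSecondDiff (hp : DifferentiableAt ℝ f (x + h))
    (hm : DifferentiableAt ℝ f (x - h)) :
    HasDerivAt (fun h => f (x + h) + f (x - h) - 2 * f x)
      (deriv f (x + h) - deriv f (x - h)) h := by
  simpa [sub_eq_add_neg] using ((hp.hasDerivAt.comp_const_add x h).fun_add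
    (hm.hasDerivAt.comp_const_sub x h)).sub_const (2 * f x)

theorem add_mem_Icc_sub_add (hh : h ∈ Icc 0 r) : x + h ∈ Icc (x - r) (x + r) :=
  ⟨by linarith [hh.1, hh.2], by linarith [hh.2]⟩

theorem sub_mem_Icc_sub_add (hh : h ∈ Icc 0 r) : x - h ∈ Icc (x - r) (x + r) :=
  ⟨by linarith [hh.2], by linarith [hh.1, hh.2]⟩

theorem continuousOn_centralSecondDiff
    (hd1 : ∀ y ∈ Icc (x - r) (x + r), DifferentiableAt ℝ f y) :
    ContinuousOn (fun h => f (x + h) + f (x - h) - 2 * f x) (Icc 0 r) := fun _ hh =>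
  (hasDerivAt_centralSecondDiff (hd1 _ (add_mem_Icc_sub_add hh))
    (hd1 _ (sub_mem_Icc_sub_add hh))).continuousAt.continuousWithinAt

variable (hd1 : ∀ y ∈ Icc (x - r) (x + r), DifferentiableAt ℝ f y)
  (hd2 : ∀ y ∈ Icc (x - r) (x + r), DifferentiableAt ℝ (deriv f) y)
include hd1 hd2

theorem centralSecondDiff_le
    (hk : ∀ h ∈ Ioo 0 r, deriv (deriv f) (x + h) + deriv (deriv f) (x - h) ≤ k) :
    ∀ h ∈ Icc 0 r, f (x + h) + f (x - h) - 2 * f x ≤ k / 2 * h ^ 2 := by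
  simpa using le_mul_sq_of_second_deriv_le
    (fun h hh => hasDerivAt_centralSecondDiff (hd1 _ (add_mem_Icc_sub_add hh))
      (hd1 _ (sub_mem_Icc_sub_add hh)))
    (fun h hh => hasDerivAt_centralDiff (hd2 _ (add_mem_Icc_sub_add hh))
      (hd2 _ (sub_mem_Icc_sub_add hh)))
    (by simp only [add_zero, sub_zero]; ring) (by simp) hk

theorem le_centralSecondDiff
    (hk : ∀ h ∈ Ioo 0 r, k ≤ deriv (deriv f) (x + h) + deriv (deriv f) (x - h)) :
    ∀ h ∈ Icc 0 r, k / 2 * h ^ 2 ≤ f (x + h) + f (x - h) - 2 * f x := by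
  simpa using mul_sq_le_of_le_second_deriv
    (fun h hh => hasDerivAt_centralSecondDiff (hd1 _ (add_mem_Icc_sub_add hh))
      (hd1 _ (sub_mem_Icc_sub_add hh)))
    (fun h hh => hasDerivAt_centralDiff (hd2 _ (add_mem_Icc_sub_add hh))
      (hd2 _ (sub_mem_Icc_sub_add hh)))
    (by simp only [add_zero, sub_zero]; ring) (by simp) hk

variable (hmono : MonotoneOn (deriv (deriv f)) (Icc (x - r) (x + r)))
include hmono

-- `f''(x + h) ≤ 0`, and `f''(x - h) ≤ f''(x)` by monotonicity.
theorem centralSecondDiff_le_of_monotoneOn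
    (hneg : ∀ y ∈ Icc (x - r) (x + r), deriv (deriv f) y ≤ 0) :
    ∀ h ∈ Icc 0 r, f (x + h) + f (x - h) - 2 * f x ≤ deriv (deriv f) x / 2 * h ^ 2 := by
  refine centralSecondDiff_le hd1 hd2 fun h hh => ?_
  have hr : 0 ≤ r := hh.1.le.trans hh.2.le
  have h_right := hneg _ (add_mem_Icc_sub_add (Ioo_subset_Icc_self hh))
  have h_left := hmono (sub_mem_Icc_sub_add (Ioo_subset_Icc_self hh))
    (⟨by linarith, by linarith⟩ : x ∈ Icc (x - r) (x + r)) (by linarith [hh.1])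
  linarith

theorem le_centralSecondDiff_of_monotoneOn :
    ∀ h ∈ Icc 0 r, deriv (deriv f) (x - r) * h ^ 2 ≤ f (x + h) + f (x - h) - 2 * f x := by
  have := le_centralSecondDiff (k := 2 * deriv (deriv f) (x - r)) hd1 hd2 fun h hh => by
    have h_left : x - r ∈ Icc (x - r) (x + r) := ⟨le_rfl, by linarith [hh.1, hh.2]⟩
    have := hmono h_left (add_mem_Icc_sub_add (Ioo_subset_Icc_self hh))
      (by linarith [hh.1, hh.2])
    have := hmono h_left (sub_mem_Icc_sub_add (Ioo_subset_Icc_self hh)) (by linarith [hh.2])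
    linarith
  simpa using this

end CentralDifference

theorem setIntegral_Ioo_le_of_bounded {g : ℝ → ℝ} {a b C D : ℝ} (hab : a ≤ b)
    (hg : ContinuousOn g (Ioo a b)) (hD : ∀ x ∈ Ioo a b, D ≤ g x)
    (hC : ∀ x ∈ Ioo a b, g x ≤ C) : ∫ x in Ioo a b, g x ≤ (b - a) * C := by
  have hint : IntegrableOn g (Ioo a b) :=
    ⟨hg.aestronglyMeasurable measurableSet_Ioo,
      .restrict_of_bounded (max |D| |C|) measure_Ioo_lt_top
        (ae_restrict_of_forall_mem measurableSet_Ioo fun x hx =>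
          abs_le_max_abs_abs (hD x hx) (hC x hx))⟩
  calc ∫ x in Ioo a b, g x ≤ ∫ _ in Ioo a b, C :=
        setIntegral_mono_on hint (integrableOn_const measure_Ioo_lt_top.ne) measurableSet_Ioo hC
    _ = (b - a) * C := by simp [Real.volume_real_Ioo_of_le hab]

theorem stmt_6_general (ω : ℝ → ℝ) (ξ : ℝ) (hξ : 0 < ξ)
    (hd1 : ∀ x ∈ Set.Icc (0 : ℝ) (2 * ξ), DifferentiableAt ℝ ω x)
    (hd2 : ∀ x ∈ Set.Icc (0 : ℝ) (2 * ξ), DifferentiableAt ℝ (deriv ω) x)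
    (hneg : ∀ x ∈ Set.Icc (0 : ℝ) (2 * ξ), deriv (deriv ω) x < 0)
    (hmono : MonotoneOn (deriv (deriv ω)) (Set.Icc 0 (2 * ξ))) :
    (∀ η : ℝ, 0 < η → 2 * η ≤ ξ →
      ω (ξ + 2 * η) + ω (ξ - 2 * η) - 2 * ω ξ ≤ 2 * deriv (deriv ω) ξ * η ^ 2) ∧
    (∫ η in Set.Ioo (0 : ℝ) (ξ / 2),
        (ω (ξ + 2 * η) + ω (ξ - 2 * η) - 2 * ω ξ) / η ^ 2) ≤ ξ * deriv (deriv ω) ξ := by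
  have hI : Icc (ξ - ξ) (ξ + ξ) = Icc 0 (2 * ξ) := by rw [sub_self, two_mul]
  rw [← hI] at hd1 hd2 hneg hmono
  have upper := centralSecondDiff_le_of_monotoneOn hd1 hd2 hmono fun y hy => (hneg y hy).le
  have lower := le_centralSecondDiff_of_monotoneOn hd1 hd2 hmono
  have hmem : ∀ η ∈ Ioo 0 (ξ / 2), 2 * η ∈ Icc 0 ξ := fun η hη =>
    ⟨by linarith [hη.1], by linarith [hη.2]⟩
  refine ⟨fun η hη h2η => by linarith [upper (2 * η) ⟨by linarith, h2η⟩], ?_⟩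
  calc _ ≤ (ξ / 2 - 0) * (2 * deriv (deriv ω) ξ) := by
        refine setIntegral_Ioo_le_of_bounded (D := 4 * deriv (deriv ω) (ξ - ξ))
          (by linarith) ?_
          (fun η hη => (le_div_iff₀ (pow_pos hη.1 2)).2 (by linarith [lower _ (hmem _ hη)]))
          (fun η hη => (div_le_iff₀ (pow_pos hη.1 2)).2 (by linarith [upper _ (hmem _ hη)]))
        exact ((continuousOn_centralSecondDiff hd1).comp (continuous_const_mul 2).continuousOn
          hmem).div (continuous_pow 2).continuousOn fun η hη => (pow_pos hη.1 2).ne'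
    _ = ξ * deriv (deriv ω) ξ := by ring

/-- If `ω` is `C²` on an interval containing `[0, 2ξ]` with `ω''` negative and
nondecreasing there, then `ω(ξ+2η) + ω(ξ-2η) - 2ω(ξ) ≤ 2ω''(ξ)η²` for `0 < 2η ≤ ξ`,
and consequently `∫₀^{ξ/2} [ω(ξ+2η)+ω(ξ-2η)-2ω(ξ)]/η² dη ≤ ξ ω''(ξ)`. -/
theorem stmt_6 (ω : ℝ → ℝ) (ξ : ℝ) (hξ : 0 < ξ)
    (hd1 : ∀ x ∈ Set.Icc (0 : ℝ) (2 * ξ), DifferentiableAt ℝ ω x)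
    (hd2 : ∀ x ∈ Set.Icc (0 : ℝ) (2 * ξ), DifferentiableAt ℝ (deriv ω) x)
    (hcont : ContinuousOn (deriv (deriv ω)) (Set.Icc 0 (2 * ξ)))
    (hneg : ∀ x ∈ Set.Icc (0 : ℝ) (2 * ξ), deriv (deriv ω) x < 0)
    (hmono : MonotoneOn (deriv (deriv ω)) (Set.Icc 0 (2 * ξ))) :
    (∀ η : ℝ, 0 < η → 2 * η ≤ ξ →
      ω (ξ + 2 * η) + ω (ξ - 2 * η) - 2 * ω ξ ≤ 2 * deriv (deriv ω) ξ * η ^ 2) ∧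
    (∫ η in Set.Ioo (0 : ℝ) (ξ / 2),
        (ω (ξ + 2 * η) + ω (ξ - 2 * η) - 2 * ω ξ) / η ^ 2) ≤ ξ * deriv (deriv ω) ξ :=
  stmt_6_general ω ξ hξ hd1 hd2 hneg hmono
end

section
/- Consider the ODE system κ' = κ² - C κ^{1+2α} H^{-2α}, H' = -C κ^{2α} H^{1-2α}, with C > 0 and 0 < α < 1/2. If the initial data satisfy H(0)^{2α} κ(0)^{1-2α} ≥ C/(1-2α), then on any interval [0,T] on which the solution exists with κ bounded and H positive, the function t ↦ H(t)^{2α} κ(t)^{1-2α} is non-decreasing. -/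
/-!
Write `F = H^{2α} κ^{1-2α}` and `c = C/(1-2α)`. Along the system, `F - c` solves the linear
equation `(F - c)' = (1-2α) κ (F - c)`. A solution of a linear equation with continuous
coefficient that vanishes somewhere vanishes from then on (Grönwall), so by the intermediate
value theorem `F - c` keeps the sign of its initial value. Hence `F ≥ c`, and `F' ≥ 0`.
-/

open Set

theorem nonneg_of_hasDerivAt_eq_mul_self {k G : ℝ → ℝ} {a b : ℝ}
    (hG : ∀ x ∈ Icc a b, HasDerivAt G (k x * G x) x) (hk : ContinuousOn k (Icc a b))
    (ha : 0 ≤ G a) : ∀ x ∈ Icc a b, 0 ≤ G x := by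
  have hGc : ContinuousOn G (Icc a b) := fun x hx => (hG x hx).continuousAt.continuousWithinAt
  obtain ⟨K, hK⟩ := isCompact_Icc.exists_bound_of_continuousOn hk
  intro t ht
  by_contra! hneg
  obtain ⟨s, hs, hGs⟩ : ∃ s ∈ Icc a t, G s = 0 :=
    intermediate_value_Icc' ht.1 (hGc.mono (Icc_subset_Icc_right ht.2)) ⟨hneg.le, ha⟩
  have hsub : Icc s t ⊆ Icc a b := Icc_subset_Icc hs.1 ht.2
  have hzero := eq_zero_of_abs_deriv_le_mul_abs_self_of_eq_zero_right (hGc.mono hsub)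
    (fun x hx => (hG x (hsub (Ico_subset_Icc_self hx))).hasDerivWithinAt) hGs
    (fun x hx => by
      rw [norm_mul]
      exact mul_le_mul_of_nonneg_right (hK x (hsub (Ico_subset_Icc_self hx))) (norm_nonneg _))
    t ⟨hs.2, le_rfl⟩
  exact hneg.ne hzero

theorem hasDerivAt_rpow_mul_rpow_of_ode {β C t : ℝ} {κ H : ℝ → ℝ} (hκ : 0 < κ t) (hH : 0 < H t)
    (hκ' : HasDerivAt κ (κ t ^ 2 - C * κ t ^ (1 + β) * H t ^ (-β)) t)
    (hH' : HasDerivAt H (-(C * κ t ^ β * H t ^ (1 - β))) t) :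
    HasDerivAt (fun t => H t ^ β * κ t ^ (1 - β))
      ((1 - β) * κ t * (H t ^ β * κ t ^ (1 - β)) - C * κ t) t := by
  refine ((hH'.rpow_const (Or.inl hH.ne')).mul (hκ'.rpow_const (Or.inl hκ.ne'))).congr_deriv ?_
  have hH₁ : H t ^ (1 - β) * H t ^ (β - 1) = 1 := by
    rw [← Real.rpow_add hH, show 1 - β + (β - 1) = 0 by ring, Real.rpow_zero]
  have hH₂ : H t ^ (-β) * H t ^ β = 1 := by
    rw [← Real.rpow_add hH, neg_add_cancel, Real.rpow_zero]
  have hκ₁ : κ t ^ β * κ t ^ (1 - β) = κ t := by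
    rw [← Real.rpow_add hκ, add_sub_cancel, Real.rpow_one]
  have hκ₂ : κ t ^ (1 + β) * κ t ^ (1 - β - 1) = κ t := by
    rw [← Real.rpow_add hκ, show 1 + β + (1 - β - 1) = 1 by ring, Real.rpow_one]
  have hκ₃ : κ t ^ (1 - β - 1) * κ t = κ t ^ (1 - β) := by
    rw [← Real.rpow_add_one hκ.ne', sub_add_cancel]
  linear_combination (-(β * C) * (κ t ^ β * κ t ^ (1 - β))) * hH₁ + (-(β * C)) * hκ₁ +
    ((1 - β) * H t ^ β * κ t) * hκ₃ +
    (-((1 - β) * C) * (κ t ^ (1 + β) * κ t ^ (1 - β - 1))) * hH₂ + (-((1 - β) * C)) * hκ₂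

theorem stmt_9_general (α C T : ℝ) (hα : α < 1 / 2)
    (κ H : ℝ → ℝ)
    (hκpos : ∀ t ∈ Set.Icc (0 : ℝ) T, 0 < κ t)
    (hHpos : ∀ t ∈ Set.Icc (0 : ℝ) T, 0 < H t)
    (hκode : ∀ t ∈ Set.Icc (0 : ℝ) T,
      HasDerivAt κ (κ t ^ 2 - C * κ t ^ (1 + 2 * α) * H t ^ (-(2 * α))) t)
    (hHode : ∀ t ∈ Set.Icc (0 : ℝ) T,
      HasDerivAt H (-(C * κ t ^ (2 * α) * H t ^ (1 - 2 * α))) t)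
    (hinit : C / (1 - 2 * α) ≤ H 0 ^ (2 * α) * κ 0 ^ (1 - 2 * α)) :
    MonotoneOn (fun t => H t ^ (2 * α) * κ t ^ (1 - 2 * α)) (Set.Icc 0 T) := by
  have hβ : 0 < 1 - 2 * α := by linarith
  set F : ℝ → ℝ := fun t => H t ^ (2 * α) * κ t ^ (1 - 2 * α)
  have hF' : ∀ t ∈ Icc 0 T, HasDerivAt F ((1 - 2 * α) * κ t * (F t - C / (1 - 2 * α))) t :=
    fun t ht => by
      convert hasDerivAt_rpow_mul_rpow_of_ode (hκpos t ht) (hHpos t ht) (hκode t ht)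
        (hHode t ht) using 1
      simp only [F]
      field_simp
  have hFc : ∀ t ∈ Icc 0 T, 0 ≤ F t - C / (1 - 2 * α) :=
    nonneg_of_hasDerivAt_eq_mul_self (fun t ht => (hF' t ht).sub_const _)
      (continuousOn_const.mul fun t ht => (hκode t ht).continuousAt.continuousWithinAt)
      (sub_nonneg.2 hinit)
  refine monotoneOn_of_hasDerivWithinAt_nonneg (convex_Icc 0 T)
    (fun t ht => (hF' t ht).continuousAt.continuousWithinAt)
    (fun t ht => (hF' t (interior_subset ht)).hasDerivWithinAt) (fun t ht => ?_)
  have hκt := hκpos t (interior_subset ht)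
  have hFt := hFc t (interior_subset ht)
  positivity

/-- Monotonicity of `H^{2α} κ^{1-2α}` along the ODE system
`κ' = κ² - C κ^{1+2α} H^{-2α}`, `H' = -C κ^{2α} H^{1-2α}`, provided that initially
`H(0)^{2α} κ(0)^{1-2α} ≥ C/(1-2α)`. -/
theorem stmt_9 (α C T : ℝ) (hα0 : 0 < α) (hα : α < 1 / 2) (hC : 0 < C) (hT : 0 < T)
    (κ H : ℝ → ℝ)
    (hκpos : ∀ t ∈ Set.Icc (0 : ℝ) T, 0 < κ t)
    (hHpos : ∀ t ∈ Set.Icc (0 : ℝ) T, 0 < H t)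
    (hκode : ∀ t ∈ Set.Icc (0 : ℝ) T,
      HasDerivAt κ (κ t ^ 2 - C * κ t ^ (1 + 2 * α) * H t ^ (-(2 * α))) t)
    (hHode : ∀ t ∈ Set.Icc (0 : ℝ) T,
      HasDerivAt H (-(C * κ t ^ (2 * α) * H t ^ (1 - 2 * α))) t)
    (hinit : C / (1 - 2 * α) ≤ H 0 ^ (2 * α) * κ 0 ^ (1 - 2 * α)) :
    MonotoneOn (fun t => H t ^ (2 * α) * κ t ^ (1 - 2 * α)) (Set.Icc 0 T) :=
  stmt_9_general α C T hα κ H hκpos hHpos hκode hHode hinit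
end

section
/- Let Φ(x) = (1/(2π)) ∫_ℝ exp(ixξ - |ξ|^{2α}) dξ for 0 < α < 1/2, and Φ_t(x) = t^{-1/(2α)} Φ(t^{-1/(2α)} x). Suppose Φ satisfies 0 < Φ(x) ≤ K/(1+|x|^{1+2α}) and |Φ'(x)| ≤ K/(1+|x|^{2+2α}). Then for every f ∈ C¹(ℝ) bounded with bounded derivative, ‖(e^{-(-Δ)^α t} - 1)f‖_{C⁰} = sup_x |∫_ℝ Φ_t(y)(f(x-y) - f(x)) dy| ≤ C(α, K) t ‖f‖_{C¹}, where ‖f‖_{C¹} = ‖f‖_∞ + ‖f'‖_∞. -/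
/-!
Write `s = t^{-1/(2α)}`, so that `s^{-2α} = t`. The decay bound on `Φ` gives
`s Φ(s y) ≤ K t |y|^{-(1+2α)}`, while `|f(x - y) - f x|` is at most `M₁ |y|` and at most `2 M₀`.
Using the first bound for `|y| ≤ 1` and the second for `|y| > 1`, the integrand is dominated by
`K t (M₀ + M₁) kernelMajorant α |y|`, which is integrable because `2α < 1` (near `0`) and `1 + 2α > 1`
(near `∞`).
-/

open MeasureTheory Set

noncomputable def kernelMajorant (α r : ℝ) : ℝ :=
  if r ≤ 1 then r ^ (-(2 * α)) else 2 * r ^ (-(1 + 2 * α))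

lemma kernelMajorant_nonneg (α : ℝ) {r : ℝ} (hr : 0 ≤ r) : 0 ≤ kernelMajorant α r := by
  unfold kernelMajorant
  split_ifs
  · exact Real.rpow_nonneg hr _
  · exact mul_nonneg zero_le_two (Real.rpow_nonneg hr _)

lemma integrableOn_kernelMajorant {α : ℝ} (hα0 : 0 < α) (hα : α < 1 / 2) :
    IntegrableOn (kernelMajorant α) (Ioi 0) := by
  rw [← Ioc_union_Ioi_eq_Ioi zero_le_one]
  refine IntegrableOn.union ?_ ?_
  · have h := intervalIntegral.intervalIntegrable_rpow' (r := -(2 * α)) (a := 0) (b := 1)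
      (by linarith)
    rw [intervalIntegrable_iff_integrableOn_Ioc_of_le zero_le_one] at h
    exact h.congr_fun (fun r hr => by simp [kernelMajorant, hr.2]) measurableSet_Ioc
  · have h : IntegrableOn (fun r : ℝ => 2 * r ^ (-(1 + 2 * α))) (Ioi 1) :=
      (integrableOn_Ioi_rpow_of_lt (by linarith) one_pos).const_mul 2
    exact h.congr_fun (fun r hr => by simp [kernelMajorant, not_le.mpr (mem_Ioi.mp hr)])
      measurableSet_Ioi

lemma integrable_comp_abs_of_integrableOn_Ioi {g : ℝ → ℝ} (hg : IntegrableOn g (Ioi 0)) :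
    Integrable fun x : ℝ => g |x| := by
  have hIoi : IntegrableOn (fun x : ℝ => g |x|) (Ioi 0) :=
    hg.congr_fun (fun x hx => by rw [abs_of_pos (mem_Ioi.mp hx)]) measurableSet_Ioi
  have hIic : IntegrableOn (fun x : ℝ => g |x|) (Iic 0) := by
    have hneg : MeasurableEmbedding fun x : ℝ => -x := (Homeomorph.neg ℝ).measurableEmbedding
    rw [← Measure.map_neg_eq_self (volume : Measure ℝ), hneg.integrableOn_map_iff]
    simp_rw [Function.comp_def, abs_neg, neg_preimage, neg_Iic, neg_zero]
    exact Iff.mpr integrableOn_Ici_iff_integrableOn_Ioi hIoi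
  simpa [Iic_union_Ioi] using hIic.union hIoi

lemma rpow_neg_mul_le_kernelMajorant {α M₀ M₁ d r : ℝ} (hr : 0 < r) (hM₀ : 0 ≤ M₀)
    (hM₁ : 0 ≤ M₁) (hd₀ : d ≤ 2 * M₀) (hd₁ : d ≤ M₁ * r) :
    r ^ (-(1 + 2 * α)) * d ≤ (M₀ + M₁) * kernelMajorant α r := by
  have hpow : 0 ≤ r ^ (-(1 + 2 * α)) := Real.rpow_nonneg hr.le _
  unfold kernelMajorant
  split_ifs
  · have hshift : r ^ (-(1 + 2 * α)) * r = r ^ (-(2 * α)) := by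
      rw [← Real.rpow_add_one hr.ne']
      ring_nf
    have : 0 ≤ M₀ * r ^ (-(2 * α)) := mul_nonneg hM₀ (Real.rpow_nonneg hr.le _)
    calc r ^ (-(1 + 2 * α)) * d ≤ r ^ (-(1 + 2 * α)) * (M₁ * r) := by gcongr
      _ = M₁ * r ^ (-(2 * α)) := by rw [← hshift]; ring
      _ ≤ (M₀ + M₁) * r ^ (-(2 * α)) := by linarith
  · calc r ^ (-(1 + 2 * α)) * d ≤ r ^ (-(1 + 2 * α)) * (2 * M₀) := by gcongr
      _ ≤ (M₀ + M₁) * (2 * r ^ (-(1 + 2 * α))) := by nlinarith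

lemma mul_apply_mul_le_of_le_div {Φ : ℝ → ℝ} {K p s y : ℝ} (hK : 0 ≤ K) (hs : 0 < s)
    (hy : y ≠ 0) (hΦ : ∀ z, Φ z ≤ K / (1 + |z| ^ p)) :
    s * Φ (s * y) ≤ K * s ^ (1 - p) * |y| ^ (-p) := by
  have hsy : 0 < |s * y| := abs_pos.mpr (mul_ne_zero hs.ne' hy)
  have hdecay : Φ (s * y) ≤ K / |s * y| ^ p :=
    (hΦ _).trans (div_le_div_of_nonneg_left hK (Real.rpow_pos_of_pos hsy _)
      (lt_one_add _).le)
  calc s * Φ (s * y) ≤ s * (K / |s * y| ^ p) := by gcongr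
    _ = K * s ^ (1 - p) * |y| ^ (-p) := by
      rw [abs_mul, abs_of_pos hs, Real.mul_rpow hs.le (abs_nonneg y), Real.rpow_sub hs,
        Real.rpow_one, Real.rpow_neg (abs_nonneg y)]
      field_simp

lemma rpow_neg_inv_rpow_neg {α t : ℝ} (hα : α ≠ 0) (ht : 0 < t) :
    (t ^ (-(1 / (2 * α)))) ^ (1 - (1 + 2 * α)) = t := by
  rw [← Real.rpow_mul ht.le]
  convert Real.rpow_one t using 2
  field_simp
  ring

lemma abs_rescaled_kernel_mul_sub_le {Φ f : ℝ → ℝ} {α K M₀ M₁ t : ℝ} (hα0 : 0 < α)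
    (hK : 0 ≤ K) (ht : 0 < t) (hΦpos : ∀ z, 0 < Φ z)
    (hΦ : ∀ z, Φ z ≤ K / (1 + |z| ^ (1 + 2 * α)))
    (hf₀ : ∀ z, |f z| ≤ M₀) (hf₁ : ∀ a b, |f a - f b| ≤ M₁ * |a - b|) (x y : ℝ) :
    |t ^ (-(1 / (2 * α))) * Φ (t ^ (-(1 / (2 * α))) * y) * (f (x - y) - f x)|
      ≤ K * t * (M₀ + M₁) * kernelMajorant α |y| := by
  set s := t ^ (-(1 / (2 * α)))
  have hs : 0 < s := Real.rpow_pos_of_pos ht _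
  have hM₀ : 0 ≤ M₀ := (abs_nonneg _).trans (hf₀ 0)
  have hM₁ : 0 ≤ M₁ := by simpa using (abs_nonneg _).trans (hf₁ 1 0)
  rcases eq_or_ne y 0 with rfl | hy
  · simpa using mul_nonneg (by positivity) (kernelMajorant_nonneg α le_rfl)
  have hker : s * Φ (s * y) ≤ K * t * |y| ^ (-(1 + 2 * α)) := by
    have hst : s ^ (1 - (1 + 2 * α)) = t := rpow_neg_inv_rpow_neg hα0.ne' ht
    simpa only [hst] using mul_apply_mul_le_of_le_div hK hs hy hΦ
  have hdiff := rpow_neg_mul_le_kernelMajorant (α := α) (abs_pos.mpr hy) hM₀ hM₁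
    (d := |f (x - y) - f x|) ((abs_sub _ _).trans (by linarith [hf₀ (x - y), hf₀ x]))
    (by simpa using hf₁ (x - y) x)
  rw [abs_mul, abs_mul, abs_of_pos hs, abs_of_pos (hΦpos _)]
  calc s * Φ (s * y) * |f (x - y) - f x|
      ≤ K * t * |y| ^ (-(1 + 2 * α)) * |f (x - y) - f x| := by gcongr
    _ ≤ K * t * ((M₀ + M₁) * kernelMajorant α |y|) := by
      rw [mul_assoc]; gcongr
    _ = K * t * (M₀ + M₁) * kernelMajorant α |y| := by ring

/-- For the fractional heat kernel `Φ` (with `0 < α < 1/2`) satisfying the standard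
pointwise bounds, the semigroup difference satisfies
`‖(e^{-(-Δ)^α t} - 1)f‖_{C⁰} ≤ C(α,K) t ‖f‖_{C¹}`. -/
theorem stmt_12 (α K : ℝ) (hα0 : 0 < α) (hα : α < 1 / 2) (hK : 0 < K) :
    ∃ C > 0, ∀ Φ : ℝ → ℝ, Continuous Φ →
      (∀ x : ℝ, (Φ x : ℂ) = (1 / (2 * (Real.pi : ℂ))) *
        ∫ ξ : ℝ, Complex.exp (Complex.I * (x : ℂ) * (ξ : ℂ) - ((|ξ| ^ (2 * α) : ℝ) : ℂ))) →
      (∀ x : ℝ, 0 < Φ x) →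
      (∀ x : ℝ, Φ x ≤ K / (1 + |x| ^ (1 + 2 * α))) →
      (∀ x : ℝ, |deriv Φ x| ≤ K / (1 + |x| ^ (2 + 2 * α))) →
      ∀ t : ℝ, 0 < t → ∀ f : ℝ → ℝ, ∀ M₀ M₁ : ℝ, ContDiff ℝ 1 f →
        (∀ x : ℝ, |f x| ≤ M₀) → (∀ x : ℝ, |deriv f x| ≤ M₁) →
        ∀ x : ℝ,
          |∫ y : ℝ, t ^ (-(1 / (2 * α))) * Φ (t ^ (-(1 / (2 * α))) * y) * (f (x - y) - f x)|
            ≤ C * t * (M₀ + M₁) := by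
  set I := ∫ r in Ioi (0 : ℝ), kernelMajorant α r
  have hI : 0 ≤ I := setIntegral_nonneg measurableSet_Ioi fun r hr ↦ kernelMajorant_nonneg α hr.le
  refine ⟨2 * K * I + 1, by positivity, ?_⟩
  intro Φ _ _ hΦpos hΦ _ t ht f M₀ M₁ hf hf₀ hf₁ x
  have hM : 0 ≤ t * (M₀ + M₁) :=
    mul_nonneg ht.le (add_nonneg ((abs_nonneg _).trans (hf₀ 0)) ((abs_nonneg _).trans (hf₁ 0)))
  have hlip : ∀ a b, |f a - f b| ≤ M₁ * |a - b| := fun a b ↦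
    (convex_univ.norm_image_sub_le_of_norm_deriv_le
      (fun z _ ↦ (hf.differentiable one_ne_zero).differentiableAt) (fun z _ ↦ hf₁ z)
      (mem_univ b) (mem_univ a))
  have hbound := abs_rescaled_kernel_mul_sub_le hα0 hK.le ht hΦpos hΦ hf₀ hlip x
  have hdom := (integrable_comp_abs_of_integrableOn_Ioi
    (integrableOn_kernelMajorant hα0 hα)).const_mul (K * t * (M₀ + M₁))
  calc _ ≤ ∫ y, K * t * (M₀ + M₁) * kernelMajorant α |y| := by
        simp only [← Real.norm_eq_abs] at hbound ⊢
        exact norm_integral_le_of_norm_le hdom (.of_forall hbound)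
    _ = K * t * (M₀ + M₁) * (2 * I) := by rw [integral_const_mul, integral_comp_abs]
    _ ≤ (2 * K * I + 1) * t * (M₀ + M₁) := by nlinarith
end
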